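/- Let Ω ⊂ ℍ be open and let f ∈ C¹_H(Ω,ℝ²) be such that ∇_H f(x) is surjective for every x ∈ Ω. Then for every z ∈ ℝ², the level set S = f⁻¹(z) has the cone property: for every p ∈ S there exists a neighbourhood U of p such that for every α > 0 there exists r > 0 (depending on α and U) such that for every x ∈ U ∩ S one has S ∩ C_r(x,α) = {x}. -/

import Mathlib

noncomputable section

open Set

/-- The first Heisenberg group as `ℝ³`. -/
abbrev Hei : Type := ℝ × ℝ × ℝ

/-- The Heisenberg group product:
`x · y = x + y + (x₁,₁ y₁,₂ − y₁,₁ x₁,₂) e₃`. -/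
def hmul (x y : Hei) : Hei :=
  (x.1 + y.1, x.2.1 + y.2.1, x.2.2 + y.2.2 + (x.1 * y.2.1 - y.1 * x.2.1))

/-- The Heisenberg group inverse `x⁻¹ = -x`. -/
def hinv (x : Hei) : Hei := (-x.1, -x.2.1, -x.2.2)

/-- The intrinsic dilation `δ_r(x) = r x₁ + r² x₂`. -/
def hdil (r : ℝ) (x : Hei) : Hei := (r * x.1, r * x.2.1, r ^ 2 * x.2.2)

/-- The homogeneous norm `‖x‖ = max {|x₁|, √|x₂|}`. -/
def hnorm (x : Hei) : ℝ :=
  max (Real.sqrt (x.1 ^ 2 + x.2.1 ^ 2)) (Real.sqrt |x.2.2|)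

/-- The homogeneous distance `d(x,y) = ‖x⁻¹ · y‖`. -/
def hdist (x y : Hei) : ℝ := hnorm (hmul (hinv x) y)

/-- `f` is (Pansu) differentiable at `x` with differential `L`: `L` is linear (bundled),
homogeneous with respect to the intrinsic dilations, and
`f y = f x + L (x⁻¹ · y) + o (d (x, y))` as `d (x, y) → 0`. -/
def IsHDerivAt {F : Type*} [NormedAddCommGroup F] [NormedSpace ℝ F]
    (f : Hei → F) (L : Hei →L[ℝ] F) (x : Hei) : Prop :=
  (∀ r : ℝ, 0 < r → ∀ z : Hei, L (hdil r z) = r • L z) ∧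
  ∀ ε : ℝ, 0 < ε → ∃ δ : ℝ, 0 < δ ∧ ∀ y : Hei, hdist x y ≤ δ →
    ‖f y - f x - L (hmul (hinv x) y)‖ ≤ ε * hdist x y

/-- `f ∈ C¹_H(Ω, F)` with horizontal gradient `gradf`: `f` is differentiable at every point
of `Ω` with differential `gradf x`, depending continuously on `x ∈ Ω`. -/
def C1H {F : Type*} [NormedAddCommGroup F] [NormedSpace ℝ F]
    (Ω : Set Hei) (f : Hei → F) (gradf : Hei → Hei →L[ℝ] F) : Prop :=
  (∀ x ∈ Ω, IsHDerivAt f (gradf x) x) ∧ ContinuousOn gradf Ω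

/-- The closed intrinsic cone with vertex at the origin, base `H₂`, axis `H₁`, width `r`
and opening `α`: `C_r(α) = { x : √|x₂| ≤ α |x₁| ≤ α r }`. -/
def coneAtOrigin (α r : ℝ) : Set Hei :=
  {x : Hei | Real.sqrt |x.2.2| ≤ α * Real.sqrt (x.1 ^ 2 + x.2.1 ^ 2) ∧
    α * Real.sqrt (x.1 ^ 2 + x.2.1 ^ 2) ≤ α * r}

/-- The closed intrinsic cone with vertex `p`: `C_r(p, α) = p · C_r(α)`. -/
def coneAt (p : Hei) (α r : ℝ) : Set Hei := hmul p '' coneAtOrigin α r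

/-!
Near `p` the differential `∇_H f(x)` stays uniformly injective on `H₁`, say
`C |h| ≤ |∇_H f(x) h|`. A cone point `v = (h, c)` with `h ≠ 0` is conjugate to its horizontal
part, `v = w · h · w⁻¹`, by a horizontal `w` with `|w| ≲ α² |h|`: conjugation only shifts the
vertical coordinate by `2 ω(w, h)`, `ω` the symplectic form on `H₁`. Applying the mean value
inequality on the three horizontal segments of this loop, `f(x · v) - f(x)` differs from
`∇_H f(x) h` by at most `ε (2|w| + |h|)`, where `ε` bounds the oscillation of `∇_H f` on the region
swept by the loop. Taking `ε` small in terms of `α` makes this less than `C |h|`, and by uniform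
continuity of `∇_H f` the loop stays in such a region once `r` is small, uniformly for `x` near
`p`. So `f(x · v) = f(x)` forces `h = 0`, and then the cone condition gives `c = 0`.
-/

theorem hmul_assoc (x y z : Hei) : hmul (hmul x y) z = hmul x (hmul y z) := by
  ext <;> simp only [hmul] <;> ring

@[simp]
theorem hmul_zero (x : Hei) : hmul x 0 = x := by
  simp [hmul]

theorem hinv_eq_neg (x : Hei) : hinv x = -x := rfl

theorem hinv_hmul_cancel_left (x y : Hei) : hmul (hinv x) (hmul x y) = y := by
  ext <;> simp only [hmul, hinv] <;> ring

theorem hmul_smul_smul (u : Hei) (s t : ℝ) : hmul (s • u) (t • u) = (s + t) • u := by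
  ext <;> simp only [hmul, Prod.smul_fst, Prod.smul_snd, smul_eq_mul] <;> ring

theorem hnorm_nonneg (x : Hei) : 0 ≤ hnorm x :=
  (Real.sqrt_nonneg _).trans (le_max_left _ _)

theorem hnorm_smul_of_horizontal {u : Hei} (hu : u.2.2 = 0) (t : ℝ) :
    hnorm (t • u) = |t| * hnorm u := by
  simp only [hnorm, Prod.smul_fst, Prod.smul_snd, smul_eq_mul, hu, mul_zero, abs_zero,
    Real.sqrt_zero]
  rw [max_eq_left (Real.sqrt_nonneg _), max_eq_left (Real.sqrt_nonneg _),
    ← Real.sqrt_sq_eq_abs, ← Real.sqrt_mul (sq_nonneg t)]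
  congr 1
  ring

theorem continuous_hmul : Continuous fun z : Hei × Hei => hmul z.1 z.2 := by
  unfold hmul
  fun_prop

theorem norm_le_of_abs_le {q : Hei} {R : ℝ} (h₁ : |q.1| ≤ R) (h₂ : |q.2.1| ≤ R)
    (h₃ : |q.2.2| ≤ R) : ‖q‖ ≤ R := by
  simpa only [Prod.norm_def, Real.norm_eq_abs, max_le_iff] using ⟨h₁, h₂, h₃⟩

theorem abs_fst_le_norm (q : Hei) : |q.1| ≤ ‖q‖ := norm_fst_le q

theorem abs_snd_fst_le_norm (q : Hei) : |q.2.1| ≤ ‖q‖ :=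
  (norm_fst_le q.2).trans (norm_snd_le q)

theorem norm_horizontal_le_sqrt (a b : ℝ) : ‖((a, b, 0) : Hei)‖ ≤ √(a ^ 2 + b ^ 2) :=
  norm_le_of_abs_le (Real.abs_le_sqrt (by nlinarith)) (Real.abs_le_sqrt (by nlinarith))
    (by simp only [abs_zero]; positivity)

theorem norm_horizontal_loop_points_le {w h : Hei} (hw : w.2.2 = 0) (hh : h.2.2 = 0) {t : ℝ}
    (ht : t ∈ Icc (0 : ℝ) 1) :
    ‖hmul w (t • h)‖ ≤ ‖w‖ + ‖h‖ + 4 * ‖w‖ * ‖h‖ ∧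
      ‖hmul (hmul w h) (t • hinv w)‖ ≤ ‖w‖ + ‖h‖ + 4 * ‖w‖ * ‖h‖ := by
  obtain ⟨ht₀, ht₁⟩ := ht
  have hw₁ := abs_fst_le_norm w
  have hw₂ := abs_snd_fst_le_norm w
  have hh₁ := abs_fst_le_norm h
  have hh₂ := abs_snd_fst_le_norm h
  have hW := norm_nonneg w
  have hH := norm_nonneg h
  have hω : |w.1 * h.2.1 - h.1 * w.2.1| ≤ 2 * ‖w‖ * ‖h‖ := by
    rw [abs_le]; constructor <;> nlinarith [abs_le.1 hw₁, abs_le.1 hw₂, abs_le.1 hh₁, abs_le.1 hh₂]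
  simp only [hmul, hinv, Prod.smul_fst, Prod.smul_snd, smul_eq_mul, hw, hh]
  have hWH : 0 ≤ ‖w‖ * ‖h‖ := mul_nonneg hW hH
  obtain ⟨hω₁, hω₂⟩ := abs_le.1 hω
  constructor <;> refine norm_le_of_abs_le ?_ ?_ ?_ <;> dsimp only <;> rw [abs_le] <;>
    constructor <;>
    nlinarith [abs_le.1 hw₁, abs_le.1 hw₂, abs_le.1 hh₁, abs_le.1 hh₂, mul_nonneg ht₀ hW,
      mul_nonneg ht₀ hH, mul_nonneg (sub_nonneg.2 ht₁) hW, mul_nonneg (sub_nonneg.2 ht₁) hH]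

-- `w · (a, b, 0) · w⁻¹ = (a, b, 2 ω(w, (a, b)))` for horizontal `w`; this `w` is a multiple of
-- `(b, -a)` with `ω(w, (a, b)) = c / 2`.
def conjugator (a b c : ℝ) : Hei :=
  (c / (2 * (a ^ 2 + b ^ 2)) * b, -(c / (2 * (a ^ 2 + b ^ 2)) * a), 0)

theorem hmul_conjugator {a b c : ℝ} (hab : a ^ 2 + b ^ 2 ≠ 0) :
    hmul (conjugator a b c) (hmul (a, b, 0) (hinv (conjugator a b c))) = (a, b, c) := by
  ext <;> simp only [hmul, hinv, conjugator] <;> field_simp <;> ring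

theorem norm_conjugator_le {a b c K : ℝ} (hK : 0 ≤ K) (hc : |c| ≤ K * (a ^ 2 + b ^ 2)) :
    ‖conjugator a b c‖ ≤ K / 2 * √(a ^ 2 + b ^ 2) := by
  have hk : |c / (2 * (a ^ 2 + b ^ 2))| ≤ K / 2 := by
    rcases (add_nonneg (sq_nonneg a) (sq_nonneg b)).eq_or_lt with hab | hab
    · rw [← hab]; simp only [mul_zero, div_zero, abs_zero]; positivity
    · rw [abs_div, abs_of_pos (by positivity : (0 : ℝ) < 2 * (a ^ 2 + b ^ 2)),
        div_le_iff₀ (by positivity)]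
      linarith
  have ha : |a| ≤ √(a ^ 2 + b ^ 2) := Real.abs_le_sqrt (by nlinarith)
  have hb : |b| ≤ √(a ^ 2 + b ^ 2) := Real.abs_le_sqrt (by nlinarith)
  refine norm_le_of_abs_le ?_ ?_ (by simp only [conjugator, abs_zero]; positivity) <;>
    simp only [conjugator, abs_neg, abs_mul] <;> gcongr

theorem zero_mem_coneAtOrigin {α r : ℝ} (hα : 0 ≤ α) (hr : 0 ≤ r) : 0 ∈ coneAtOrigin α r := by
  simp only [coneAtOrigin, mem_ofPred_eq, Prod.fst_zero, Prod.snd_zero]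
  norm_num
  positivity

theorem exists_closedBall_forall_norm_hmul_sub_le {E : Type*} [SeminormedAddCommGroup E]
    {g : Hei → E} {Ω : Set Hei} (hΩ : IsOpen Ω) (hg : ContinuousOn g Ω) {p : Hei} (hp : p ∈ Ω) :
    ∃ ρ > 0, ∀ ε > 0, ∃ η > 0, ∀ x ∈ Metric.closedBall p ρ, ∀ q : Hei, ‖q‖ ≤ η →
      hmul x q ∈ Ω ∧ ‖g (hmul x q) - g x‖ ≤ ε := by
  obtain ⟨ρ₀, hρ₀, hball⟩ :=
    Metric.isOpen_iff.1 (hΩ.preimage continuous_hmul) (p, 0) (by simpa using hp)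
  set K := Metric.closedBall (p, (0 : Hei)) (ρ₀ / 2)
  have hK : K ⊆ (fun z : Hei × Hei => hmul z.1 z.2) ⁻¹' Ω :=
    (Metric.closedBall_subset_ball (half_lt_self hρ₀)).trans hball
  have huc := (isCompact_closedBall _ _).uniformContinuousOn_of_continuous
    (hg.comp continuous_hmul.continuousOn hK)
  refine ⟨ρ₀ / 2, half_pos hρ₀, fun ε hε => ?_⟩
  obtain ⟨δ, hδ, hgδ⟩ := Metric.uniformContinuousOn_iff.1 huc ε hε
  refine ⟨min (ρ₀ / 2) (δ / 2), by positivity, fun x hx q hq => ?_⟩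
  have hxq : (x, q) ∈ K := by
    rw [Metric.mem_closedBall, Prod.dist_eq, dist_zero_right]
    exact max_le hx (hq.trans (min_le_left _ _))
  have hx0 : (x, (0 : Hei)) ∈ K := by
    rw [Metric.mem_closedBall, Prod.dist_eq, dist_self]
    exact max_le hx (by positivity)
  refine ⟨hK hxq, ?_⟩
  have := hgδ _ hxq _ hx0 <| by
    rw [Prod.dist_eq, dist_self, dist_zero_right, max_eq_right (norm_nonneg q)]
    linarith [min_le_right (ρ₀ / 2) (δ / 2)]
  simpa [dist_eq_norm] using this.le

section

variable {F : Type*} [NormedAddCommGroup F] [NormedSpace ℝ F]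

theorem IsHDerivAt.hasDerivAt_hmul_smul {f : Hei → F} {L : Hei →L[ℝ] F} {q u : Hei} {t : ℝ}
    (hu : u.2.2 = 0) (hf : IsHDerivAt f L (hmul q (t • u))) :
    HasDerivAt (fun s => f (hmul q (s • u))) (L u) t := by
  rw [hasDerivAt_iff_isLittleO, Asymptotics.isLittleO_iff]
  intro C hC
  set N := hnorm u + 1
  have hN : 0 < N := by linarith [hnorm_nonneg u]
  obtain ⟨δ, hδ, hfδ⟩ := hf.2 (C / N) (by positivity)
  filter_upwards [Metric.ball_mem_nhds t (div_pos hδ hN)] with s hs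
  rw [Metric.mem_ball, Real.dist_eq, lt_div_iff₀ hN] at hs
  have hstep : hmul q (s • u) = hmul (hmul q (t • u)) ((s - t) • u) := by
    rw [hmul_assoc, hmul_smul_smul, add_sub_cancel]
  have hdist_eq : hdist (hmul q (t • u)) (hmul q (s • u)) = |s - t| * hnorm u := by
    rw [hdist, hstep, hinv_hmul_cancel_left, hnorm_smul_of_horizontal hu]
  have hdist_le : |s - t| * hnorm u ≤ |s - t| * N := by
    gcongr
    linarith
  have h := hfδ _ (by rw [hdist_eq]; linarith)
  rw [hdist_eq, hstep, hinv_hmul_cancel_left, ← hstep, map_smul] at h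
  calc _ ≤ C / N * (|s - t| * hnorm u) := h
    _ ≤ C / N * (|s - t| * N) := by gcongr
    _ = C * ‖s - t‖ := by rw [Real.norm_eq_abs]; field_simp

theorem norm_sub_sub_le_of_horizontal_segment {f : Hei → F} {D : Hei → Hei →L[ℝ] F}
    {L : Hei →L[ℝ] F} {q u : Hei} {ε : ℝ} (hu : u.2.2 = 0)
    (hD : ∀ t ∈ Icc (0 : ℝ) 1,
      IsHDerivAt f (D (hmul q (t • u))) (hmul q (t • u)) ∧ ‖D (hmul q (t • u)) - L‖ ≤ ε) :
    ‖f (hmul q u) - f q - L u‖ ≤ ε * ‖u‖ := by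
  have key := norm_image_sub_le_of_norm_deriv_le_segment_01'
    (f := fun s : ℝ => f (hmul q (s • u)) - s • L u)
    (f' := fun s => D (hmul q (s • u)) u - L u) (C := ε * ‖u‖)
    (fun t ht => (((hD t ht).1.hasDerivAt_hmul_smul hu).sub
      ((hasDerivAt_id t).smul_const (L u)) |>.congr_deriv (by simp)).hasDerivWithinAt)
    (fun t ht => by
      rw [← sub_apply]
      exact (D _ - L).le_of_opNorm_le (hD t (Ico_subset_Icc_self ht)).2 u)
  simpa [sub_right_comm] using key

theorem norm_sub_sub_le_of_horizontal_loop {f : Hei → F} {D : Hei → Hei →L[ℝ] F}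
    {L : Hei →L[ℝ] F} {x w h : Hei} {ε : ℝ} (hw : w.2.2 = 0) (hh : h.2.2 = 0)
    (hD : ∀ q : Hei, ‖q‖ ≤ ‖w‖ + ‖h‖ + 4 * ‖w‖ * ‖h‖ →
      IsHDerivAt f (D (hmul x q)) (hmul x q) ∧ ‖D (hmul x q) - L‖ ≤ ε) :
    ‖f (hmul x (hmul w (hmul h (hinv w)))) - f x - L h‖ ≤ ε * (2 * ‖w‖ + ‖h‖) := by
  have hW := norm_nonneg w
  have hH := norm_nonneg h
  have leg₁ := norm_sub_sub_le_of_horizontal_segment (f := f) (D := D) (L := L) (q := x) hw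
    fun t ht => hD _ <| by
      rw [norm_smul, Real.norm_of_nonneg ht.1]
      nlinarith [ht.2, mul_nonneg hW hH]
  have leg₂ := norm_sub_sub_le_of_horizontal_segment (f := f) (D := D) (L := L) (q := hmul x w) hh
    fun t ht => by
      rw [hmul_assoc]
      exact hD _ (norm_horizontal_loop_points_le hw hh ht).1
  have leg₃ := norm_sub_sub_le_of_horizontal_segment (f := f) (D := D) (L := L)
    (q := hmul (hmul x w) h) (u := hinv w) (by simp [hinv_eq_neg, hw])
    fun t ht => by
      rw [hmul_assoc, hmul_assoc, ← hmul_assoc w]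
      exact hD _ (norm_horizontal_loop_points_le hw hh ht).2
  simp only [hinv_eq_neg, norm_neg, map_neg, hmul_assoc] at leg₂ leg₃ ⊢
  calc _ = ‖(f (hmul x w) - f x - L w) + (f (hmul x (hmul w h)) - f (hmul x w) - L h) +
        (f (hmul x (hmul w (hmul h (-w)))) - f (hmul x (hmul w h)) - -L w)‖ := by
          congr 1; abel
    _ ≤ ε * ‖w‖ + ε * ‖h‖ + ε * ‖w‖ := norm_add₃_le.trans (by gcongr)
    _ = ε * (2 * ‖w‖ + ‖h‖) := by ring

theorem eq_zero_of_mem_coneAtOrigin {f : Hei → F} {D : Hei → Hei →L[ℝ] F} {L : Hei →L[ℝ] F}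
    {x v : Hei} {C ε η α r : ℝ} (hL : ∀ a b : ℝ, C * √(a ^ 2 + b ^ 2) ≤ ‖L (a, b, 0)‖)
    (hD : ∀ q : Hei, ‖q‖ ≤ η →
      IsHDerivAt f (D (hmul x q)) (hmul x q) ∧ ‖D (hmul x q) - L‖ ≤ ε)
    (hε₀ : 0 ≤ ε) (hε : ε * (1 + α ^ 2) < C) (hα : 0 < α) (hr : r ≤ 1)
    (hη : (1 + 3 * α ^ 2) * r ≤ η) (hv : v ∈ coneAtOrigin α r) (hfv : f (hmul x v) = f x) :
    v = 0 := by
  obtain ⟨a, b, c⟩ := v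
  obtain ⟨hvert, hrad⟩ := hv
  set m := √(a ^ 2 + b ^ 2)
  have hmr : m ≤ r := le_of_mul_le_mul_left hrad hα
  have hc : |c| ≤ α ^ 2 * (a ^ 2 + b ^ 2) := by
    have := (Real.sqrt_le_left (by positivity)).1 hvert
    rwa [mul_pow, Real.sq_sqrt (by positivity)] at this
  rcases (Real.sqrt_nonneg (a ^ 2 + b ^ 2)).eq_or_lt with hm | hm
  · have hab : a ^ 2 + b ^ 2 = 0 :=
      le_antisymm (Real.sqrt_eq_zero'.1 hm.symm) (by positivity)
    have ha : a = 0 := by nlinarith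
    have hb : b = 0 := by nlinarith
    have hc : c = 0 := abs_nonpos_iff.1 (by simpa [hab] using hc)
    simp [ha, hb, hc]
  · exfalso
    set w := conjugator a b c
    have hw : ‖w‖ ≤ α ^ 2 / 2 * m := norm_conjugator_le (sq_nonneg α) hc
    have hh : ‖((a, b, 0) : Hei)‖ ≤ m := norm_horizontal_le_sqrt a b
    have hloop := norm_sub_sub_le_of_horizontal_loop (f := f) (D := D) (L := L) (x := x) (w := w)
      (h := (a, b, 0)) rfl rfl fun q hq => hD q <| hq.trans <| by
        nlinarith [norm_nonneg w, norm_nonneg ((a, b, 0) : Hei), mul_le_mul hw hh]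
    rw [hmul_conjugator (Real.sqrt_pos.1 hm).ne', hfv, sub_self, zero_sub, norm_neg] at hloop
    have := calc C * m ≤ ‖L (a, b, 0)‖ := hL a b
      _ ≤ ε * (2 * ‖w‖ + ‖((a, b, 0) : Hei)‖) := hloop
      _ ≤ ε * (1 + α ^ 2) * m := by nlinarith
      _ < C * m := by gcongr
    exact lt_irrefl _ this

theorem apply_vertical_eq_zero {L : Hei →L[ℝ] F}
    (hL : ∀ r : ℝ, 0 < r → ∀ z : Hei, L (hdil r z) = r • L z) (c : ℝ) : L (0, 0, c) = 0 := by
  have h := hL 2 two_pos (0, 0, c)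
  have h4 : hdil 2 (0, 0, c) = (4 : ℝ) • ((0, 0, c) : Hei) := by
    ext <;> simp only [hdil, Prod.smul_fst, Prod.smul_snd, smul_eq_mul] <;> ring
  rw [h4, map_smul] at h
  have h2 : (2 : ℝ) • L (0, 0, c) = 0 := by
    rw [show (2 : ℝ) = 4 - 2 by norm_num, sub_smul, h, sub_self]
  exact (smul_eq_zero.1 h2).resolve_left two_ne_zero

end

theorem exists_pos_mul_sqrt_le_norm_apply {L : Hei →L[ℝ] ℝ × ℝ}
    (hL : ∀ r : ℝ, 0 < r → ∀ z : Hei, L (hdil r z) = r • L z) (hs : Function.Surjective L) :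
    ∃ C > 0, ∀ a b : ℝ, C * √(a ^ 2 + b ^ 2) ≤ ‖L (a, b, 0)‖ := by
  set T : ℝ × ℝ →L[ℝ] ℝ × ℝ :=
    L.comp ((ContinuousLinearMap.id ℝ ℝ).prodMap (ContinuousLinearMap.inl ℝ ℝ ℝ))
  have hT : ∀ a b : ℝ, T (a, b) = L (a, b, 0) := fun a b => rfl
  have hTs : Function.Surjective T := by
    intro y
    obtain ⟨v, rfl⟩ := hs y
    refine ⟨(v.1, v.2.1), ?_⟩
    rw [hT, ← sub_eq_zero, ← map_sub, ← apply_vertical_eq_zero hL (-v.2.2)]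
    congr 1
    ext <;> simp
  have hTi : Function.Injective (T : ℝ × ℝ →ₗ[ℝ] ℝ × ℝ) :=
    LinearMap.injective_iff_surjective.2 hTs
  obtain ⟨K, -, hK⟩ :=
    (T : ℝ × ℝ →ₗ[ℝ] ℝ × ℝ).exists_antilipschitzWith (LinearMap.ker_eq_bot.2 hTi)
  obtain ⟨C, hC, hCT⟩ := antilipschitzWith_iff_exists_mul_le_norm.1 ⟨K, hK⟩
  refine ⟨C / 2, half_pos hC, fun a b => ?_⟩
  have ha : |a| ≤ ‖(a, b)‖ := norm_fst_le (a, b)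
  have hb : |b| ≤ ‖(a, b)‖ := norm_snd_le (a, b)
  have hsqrt : √(a ^ 2 + b ^ 2) ≤ 2 * ‖(a, b)‖ :=
    (Real.sqrt_le_left (by positivity)).2
      (by nlinarith [sq_abs a, sq_abs b, abs_nonneg a, abs_nonneg b])
  calc C / 2 * √(a ^ 2 + b ^ 2) ≤ C * ‖(a, b)‖ := by nlinarith
    _ ≤ ‖T (a, b)‖ := hCT (a, b)

theorem exists_pos_eventually_mul_sqrt_le_norm_apply {D : Hei → Hei →L[ℝ] ℝ × ℝ} {p : Hei}
    (hD : ContinuousAt D p) (hL : ∀ r : ℝ, 0 < r → ∀ z : Hei, D p (hdil r z) = r • D p z)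
    (hs : Function.Surjective (D p)) :
    ∃ C > 0, ∀ᶠ x in nhds p, ∀ a b : ℝ, C * √(a ^ 2 + b ^ 2) ≤ ‖D x (a, b, 0)‖ := by
  obtain ⟨C, hC, hCp⟩ := exists_pos_mul_sqrt_le_norm_apply hL hs
  refine ⟨C / 2, half_pos hC, ?_⟩
  filter_upwards [hD.eventually (Metric.closedBall_mem_nhds (D p) (half_pos hC))] with x hx a b
  have hdev := (D x - D p).le_of_opNorm_le (mem_closedBall_iff_norm.1 hx) (a, b, 0)
  have hh := norm_horizontal_le_sqrt a b
  rw [sub_apply] at hdev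
  have := norm_sub_norm_le (D p (a, b, 0)) (D x (a, b, 0))
  rw [norm_sub_rev] at this
  nlinarith [hCp a b]

/-- **Cone property of level sets.** Let `f ∈ C¹_H(Ω, ℝ²)` with `∇_H f (x)` surjective for
every `x ∈ Ω`. Then every level set `S = f⁻¹(z)` has the cone property: for every `p ∈ S`
there is a neighbourhood `U` of `p` such that for every `α > 0` there exists `r > 0`
(depending on `α` and `U`) such that `S ∩ C_r(x, α) = {x}` for all `x ∈ U ∩ S`. -/
theorem level_set_cone_property
    (Ω : Set Hei) (hΩ : IsOpen Ω) (f : Hei → ℝ × ℝ)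
    (gradf : Hei → Hei →L[ℝ] (ℝ × ℝ)) (hf : C1H Ω f gradf)
    (hsurj : ∀ x ∈ Ω, Function.Surjective (gradf x)) (z : ℝ × ℝ) :
    ∀ p ∈ {x ∈ Ω | f x = z}, ∃ U ∈ nhds p, ∀ α : ℝ, 0 < α → ∃ r : ℝ, 0 < r ∧
      ∀ x ∈ U ∩ {x ∈ Ω | f x = z},
        {x ∈ Ω | f x = z} ∩ coneAt x α r = {x} := by
  rintro p ⟨hp, -⟩
  obtain ⟨C, hC, hlow⟩ := exists_pos_eventually_mul_sqrt_le_norm_apply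
    (hf.2.continuousAt (hΩ.mem_nhds hp)) (hf.1 p hp).1 (hsurj p hp)
  obtain ⟨V, hV, hVlow⟩ := hlow.exists_mem
  obtain ⟨ρ, hρ, hunif⟩ := exists_closedBall_forall_norm_hmul_sub_le hΩ hf.2 hp
  refine ⟨Metric.closedBall p ρ ∩ V, Filter.inter_mem (Metric.closedBall_mem_nhds p hρ) hV,
    fun α hα => ?_⟩
  obtain ⟨η, hη, hgood⟩ := hunif (C / (2 * (1 + α ^ 2))) (by positivity)
  refine ⟨min 1 (η / (1 + 3 * α ^ 2)), by positivity, ?_⟩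
  rintro x ⟨⟨hxρ, hxV⟩, hxΩ, hxz⟩
  refine subset_antisymm ?_ (singleton_subset_iff.2
    ⟨⟨hxΩ, hxz⟩, 0, zero_mem_coneAtOrigin hα.le (by positivity), hmul_zero x⟩)
  rintro _ ⟨⟨-, hyz⟩, v, hv, rfl⟩
  have hv0 : v = 0 := eq_zero_of_mem_coneAtOrigin (hVlow x hxV)
    (fun q hq => ⟨hf.1 _ (hgood x hxρ q hq).1, (hgood x hxρ q hq).2⟩) (by positivity)
    (by field_simp; linarith) hα (min_le_left _ _)
    (by rw [← le_div_iff₀' (by positivity)]; exact min_le_right _ _) hv (hyz.trans hxz.symm)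
  rw [hv0, hmul_zero, mem_singleton_iff]
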